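/- arXiv:1503.00019 — 4 statements merged into one kernel-verified Lean document; each statement's English description precedes it below -/
import Mathlib

section
/- Fix constants b > 0 and M > 0 and define p(y) = b·M·e^{b/y} / ((e^{b/y} - 1)²·y²) for y > 0. Then p is strictly increasing on (0, ∞) and tends to M/b as y → ∞. -/
/-!
With `u = b / (2y)` the identity `e^{2u} - 1 = 2 e^u sinh u` turns `p` into
`(M / b) / (sinh u / u)^2`. Since `sinh` is strictly convex on `[0, ∞)` and vanishes at `0`,
its secant slope `sinh u / u` is strictly increasing in `u`, hence strictly decreasing in `y`;
and it tends to `sinh' 0 = 1` as `u → 0`, i.e. as `y → ∞`.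
-/
open Real Filter Set Topology

namespace Real

theorem strictConvexOn_sinh : StrictConvexOn ℝ (Ici 0) sinh :=
  StrictMonoOn.strictConvexOn_of_deriv (convex_Ici 0) continuous_sinh.continuousOn <| by
    rw [deriv_sinh, interior_Ici]
    exact cosh_strictMonoOn.mono Ioi_subset_Ici_self

theorem strictMonoOn_sinh_div_self : StrictMonoOn (fun x => sinh x / x) (Ioi 0) :=
  fun x hx y hy hxy => by
    simpa using strictConvexOn_sinh.secant_strict_mono self_mem_Ici
      (mem_Ici.2 (le_of_lt hx)) (mem_Ici.2 (le_of_lt hy)) hx.ne' hy.ne' hxy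

theorem tendsto_sinh_div_self_nhdsNE_zero : Tendsto (fun x => sinh x / x) (𝓝[≠] 0) (𝓝 1) := by
  simpa [div_eq_inv_mul] using hasDerivAt_iff_tendsto_slope_zero.1 (hasDerivAt_sinh 0)

theorem exp_two_mul_div_sq_exp_two_mul_sub_one (x : ℝ) :
    exp (2 * x) / (exp (2 * x) - 1) ^ 2 = 1 / (2 * sinh x) ^ 2 := by
  have hx : exp (2 * x) - 1 = 2 * exp x * sinh x := by
    rw [sinh_eq, two_mul, exp_add, exp_neg]
    field_simp
  rw [hx, two_mul, exp_add]
  field_simp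

end Real

theorem mul_exp_div_sq_exp_sub_one_eq {b y : ℝ} (M : ℝ) (hb : b ≠ 0) (hy : y ≠ 0) :
    b * M * exp (b / y) / ((exp (b / y) - 1) ^ 2 * y ^ 2) =
      M / b / (sinh (b / (2 * y)) / (b / (2 * y))) ^ 2 := by
  have hs : sinh (b / (2 * y)) ≠ 0 := by
    rw [Ne, sinh_eq_zero]
    positivity
  have key := exp_two_mul_div_sq_exp_two_mul_sub_one (b / (2 * y))
  rw [show 2 * (b / (2 * y)) = b / y by field_simp] at key
  calc b * M * exp (b / y) / ((exp (b / y) - 1) ^ 2 * y ^ 2)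
      = b * M / y ^ 2 * (exp (b / y) / (exp (b / y) - 1) ^ 2) := by
        rw [div_mul_div_comm, mul_comm (y ^ 2)]
    _ = M / b / (sinh (b / (2 * y)) / (b / (2 * y))) ^ 2 := by
      rw [key]
      field_simp

theorem p_strictMono_and_tendsto (b M : ℝ) (hb : 0 < b) (hM : 0 < M)
    (p : ℝ → ℝ)
    (hp : ∀ y : ℝ, 0 < y →
      p y = b * M * Real.exp (b / y) / ((Real.exp (b / y) - 1) ^ 2 * y ^ 2)) :
    StrictMonoOn p (Set.Ioi (0 : ℝ)) ∧
      Filter.Tendsto p Filter.atTop (nhds (M / b)) := by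
  set u : ℝ → ℝ := fun y => b / (2 * y)
  set g : ℝ → ℝ := fun x => sinh x / x
  have hp_eq : EqOn p (fun y => M / b / g (u y) ^ 2) (Ioi 0) := fun y hy =>
    (hp y hy).trans (mul_exp_div_sq_exp_sub_one_eq M hb.ne' (ne_of_gt hy))
  have hu_pos : MapsTo u (Ioi 0) (Ioi 0) := fun y hy => by
    simp only [u, mem_Ioi] at hy ⊢; positivity
  have hu_anti : StrictAntiOn u (Ioi 0) := fun y hy z hz hyz =>
    div_lt_div_of_pos_left hb (by simp only [mem_Ioi] at hy; positivity) (by linarith)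
  have hgu_anti : StrictAntiOn (g ∘ u) (Ioi 0) :=
    strictMonoOn_sinh_div_self.comp_strictAntiOn hu_anti hu_pos
  have hgu_pos : ∀ y ∈ Ioi 0, 0 < g (u y) := fun y hy =>
    div_pos (sinh_pos_iff.2 (hu_pos hy)) (hu_pos hy)
  have hu_lim : Tendsto u atTop (𝓝[≠] 0) :=
    tendsto_nhdsWithin_of_tendsto_nhds_of_eventually_within _
      (tendsto_const_nhds.div_atTop (tendsto_id.const_mul_atTop two_pos))
      (eventually_gt_atTop 0 |>.mono fun y hy => (hu_pos hy).ne')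
  refine ⟨fun y hy z hz hyz => ?_, ?_⟩
  · rw [hp_eq hy, hp_eq hz]
    have hz_pos := hgu_pos z hz
    exact div_lt_div_of_pos_left (by positivity) (by positivity)
      (pow_lt_pow_left₀ (hgu_anti hy hz hyz) hz_pos.le two_ne_zero)
  · have hlim : Tendsto (fun y => M / b / g (u y) ^ 2) atTop (𝓝 (M / b / 1 ^ 2)) :=
      tendsto_const_nhds.div ((tendsto_sinh_div_self_nhdsNE_zero.comp hu_lim).pow 2) (by norm_num)
    rw [one_pow, div_one] at hlim
    exact hlim.congr' (eventually_gt_atTop 0 |>.mono fun y hy => (hp_eq hy).symm)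
end

section
/- Let ν be a Lévy measure satisfying the exponential moment conditions ∫_{y>1} e^{(α+a)y} dν < ∞ and ∫_{y<-1} e^{(α-a)y} dν < ∞, let σ ≥ 0, r ∈ ℝ, and define the risk-neutral characteristic exponent Ψ(z) = (r - σ²/2)z + σ²z²/2 + ∫_{ℝ\{0}} (e^{zy} - 1 - (e^y - 1)z) dν(y). Then for all real ω, Re Ψ(α - iω) ≤ Ψ(α) - σ²ω²/2. -/
/-!
Put `z = α - iω`. The polynomial part `P` of `Ψ` satisfies `Re P(z) = P(α) - σ²ω²/2`, and the
jump integrand `k_z = levyIntegrand z` satisfies `Re k_z(y) ≤ k_α(y)` because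
`Re e^{zy} ≤ |e^{zy}| = e^{αy}`. Integrating this pointwise inequality needs care with the Bochner
integral's junk value `0`: `k_z` is `O(y²)` near `0` and dominated by the exponential moments on
the tails, except for the compensator term `z e^y` on `y > 1`. So for `z ≠ 0`, `k_z` is
integrable exactly when `e^y` is integrable on `(1, ∞)`, a condition independent of `z`; and
`k_0 = 0`.
-/

open MeasureTheory Complex Set

noncomputable def levyIntegrand (z : ℂ) (y : ℝ) : ℂ :=
  cexp (z * y) - 1 - (cexp y - 1) * z

lemma norm_cexp_sub_one_sub_le (x : ℂ) : ‖cexp x - 1 - x‖ ≤ ‖x‖ ^ 2 * Real.exp ‖x‖ := by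
  simpa [Finset.sum_range_succ, sub_sub] using norm_exp_sub_sum_le_norm_mul_exp x 2

lemma norm_levyIntegrand_le (z : ℂ) {y : ℝ} (hy : |y| ≤ 1) :
    ‖levyIntegrand z y‖ ≤ (‖z‖ ^ 2 * Real.exp ‖z‖ + ‖z‖) * y ^ 2 := by
  have h_zy : ‖cexp (z * y) - 1 - z * y‖ ≤ ‖z‖ ^ 2 * y ^ 2 * Real.exp ‖z‖ :=
    calc _ ≤ ‖z * y‖ ^ 2 * Real.exp ‖z * y‖ := norm_cexp_sub_one_sub_le _
      _ = ‖z‖ ^ 2 * y ^ 2 * Real.exp (‖z‖ * |y|) := by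
        rw [norm_mul, norm_real, Real.norm_eq_abs, mul_pow, sq_abs]
      _ ≤ ‖z‖ ^ 2 * y ^ 2 * Real.exp ‖z‖ := by
        gcongr; exact mul_le_of_le_one_right (norm_nonneg z) hy
  have h_y : ‖cexp y - 1 - y‖ ≤ y ^ 2 := by
    simpa using norm_exp_sub_one_sub_id_le (x := (y : ℂ)) (by simpa using hy)
  calc ‖levyIntegrand z y‖ = ‖(cexp (z * y) - 1 - z * y) - z * (cexp y - 1 - y)‖ := by
        congr 1; rw [levyIntegrand]; ring
    _ ≤ ‖cexp (z * y) - 1 - z * y‖ + ‖z‖ * ‖cexp y - 1 - y‖ := by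
        rw [← norm_mul]; exact norm_sub_le _ _
    _ ≤ _ := by
        have := mul_le_mul_of_nonneg_left h_y (norm_nonneg z)
        linarith

lemma re_levyIntegrand (z : ℂ) (y : ℝ) :
    (levyIntegrand z y).re = (cexp (z * y)).re - 1 - (Real.exp y - 1) * z.re := by
  simp [levyIntegrand, ← ofReal_exp]

lemma re_levyIntegrand_le (z : ℂ) (y : ℝ) :
    (levyIntegrand z y).re ≤ (levyIntegrand z.re y).re := by
  rw [re_levyIntegrand, re_levyIntegrand, ofReal_re, ← ofReal_mul, ← ofReal_exp, ofReal_re]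
  gcongr
  exact (re_le_norm _).trans_eq (by simp [norm_exp])

lemma re_integral_nonpos {X : Type*} [MeasurableSpace X] {μ : Measure X} {f : X → ℂ}
    (hf : ∀ x, (f x).re ≤ 0) : (∫ x, f x ∂μ).re ≤ 0 := by
  by_cases hint : Integrable f μ
  · rw [← RCLike.re_eq_complex_re, ← integral_re hint]
    exact integral_nonpos hf
  · simp [integral_undef hint]

lemma re_integral_mono_of_integrable_iff {X : Type*} [MeasurableSpace X] {μ : Measure X}
    {f g : X → ℂ} (hfg : Integrable f μ ↔ Integrable g μ) (h : ∀ x, (f x).re ≤ (g x).re) :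
    (∫ x, f x ∂μ).re ≤ (∫ x, g x ∂μ).re := by
  by_cases hf : Integrable f μ
  · have hg := hfg.1 hf
    simp only [← RCLike.re_eq_complex_re, ← integral_re hf, ← integral_re hg]
    exact integral_mono hf.re hg.re h
  · simp [integral_undef hf, integral_undef (hfg.not.1 hf)]

section LevyMeasure

variable {ν : Measure ℝ}

lemma integrable_min_sq_one
    (hν : ∫⁻ y, ENNReal.ofReal (min (y ^ 2) 1) ∂ν ≠ ⊤) :
    Integrable (fun y : ℝ => min (y ^ 2) 1) ν := by
  refine ⟨by fun_prop, ?_⟩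
  rw [hasFiniteIntegral_iff_ofReal (.of_forall fun y => le_min (sq_nonneg y) zero_le_one)]
  exact hν.lt_top

lemma measure_one_le_abs_ne_top
    (hν : ∫⁻ y, ENNReal.ofReal (min (y ^ 2) 1) ∂ν ≠ ⊤) :
    ν {y | 1 ≤ |y|} ≠ ⊤ := by
  have hmarkov := mul_meas_ge_le_lintegral₀ (μ := ν)
    (f := fun y => ENNReal.ofReal (min (y ^ 2) 1)) (by fun_prop) 1
  simp only [one_mul, ENNReal.one_le_ofReal, le_min_iff, le_refl, and_true,
    one_le_sq_iff_one_le_abs] at hmarkov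
  exact ne_top_of_le_ne_top hν hmarkov

lemma integrableOn_cexp_mul_of_le {S : Set ℝ} (hS : MeasurableSet S) {β : ℝ} {z : ℂ}
    (hβ : IntegrableOn (fun y => Real.exp (β * y)) S ν) (hle : ∀ y ∈ S, z.re * y ≤ β * y) :
    IntegrableOn (fun y : ℝ => cexp (z * y)) S ν :=
  hβ.mono' (by fun_prop) <| ae_restrict_of_forall_mem hS fun y hy => by
    simpa [norm_exp] using hle y hy

lemma integrableOn_levyIntegrand_abs_le_one
    (hν : ∫⁻ y, ENNReal.ofReal (min (y ^ 2) 1) ∂ν ≠ ⊤) (z : ℂ) :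
    IntegrableOn (levyIntegrand z) {y | |y| ≤ 1} ν := by
  refine ((integrable_min_sq_one hν).restrict.const_mul
    (‖z‖ ^ 2 * Real.exp ‖z‖ + ‖z‖)).mono' (by unfold levyIntegrand; fun_prop) ?_
  refine ae_restrict_of_forall_mem (measurableSet_le (by fun_prop) (by fun_prop)) fun y hy => ?_
  have hy2 : y ^ 2 ≤ 1 := by simpa [sq_le_one_iff_abs_le_one] using hy
  simpa [min_eq_left hy2] using norm_levyIntegrand_le z hy

lemma integrableOn_levyIntegrand_Iio
    (hν : ∫⁻ y, ENNReal.ofReal (min (y ^ 2) 1) ∂ν ≠ ⊤) {β : ℝ}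
    (hβ : IntegrableOn (fun y => Real.exp (β * y)) (Iio (-1)) ν) {z : ℂ} (hz : β ≤ z.re) :
    IntegrableOn (levyIntegrand z) (Iio (-1)) ν := by
  have hfin : ν (Iio (-1)) ≠ ⊤ := ne_top_of_le_ne_top (measure_one_le_abs_ne_top hν) <|
    measure_mono fun y (hy : y < -1) => show 1 ≤ |y| by rw [abs_of_neg] <;> linarith
  have h_zy := integrableOn_cexp_mul_of_le measurableSet_Iio hβ fun y (hy : y < -1) =>
    mul_le_mul_of_nonpos_right hz (by linarith)
  have h_y : IntegrableOn (fun y : ℝ => cexp y) (Iio (-1)) ν := by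
    simpa only [one_mul] using integrableOn_cexp_mul_of_le (z := 1) (β := 0) measurableSet_Iio
      (by simpa only [zero_mul, Real.exp_zero] using integrableOn_const hfin)
      fun y (hy : y < -1) => by simp only [one_re, one_mul, zero_mul]; linarith
  have h_one : IntegrableOn (fun _ => (1 : ℂ)) (Iio (-1)) ν := integrableOn_const hfin
  exact (h_zy.sub h_one).sub ((h_y.sub h_one).mul_const z)

lemma integrableOn_levyIntegrand_Ioi_iff
    (hν : ∫⁻ y, ENNReal.ofReal (min (y ^ 2) 1) ∂ν ≠ ⊤) {β : ℝ}
    (hβ : IntegrableOn (fun y => Real.exp (β * y)) (Ioi 1) ν) {z : ℂ} (hz : z.re ≤ β)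
    (hz0 : z ≠ 0) :
    IntegrableOn (levyIntegrand z) (Ioi 1) ν ↔ IntegrableOn (fun y : ℝ => cexp y) (Ioi 1) ν := by
  have hfin : ν (Ioi 1) ≠ ⊤ := ne_top_of_le_ne_top (measure_one_le_abs_ne_top hν) <|
    measure_mono fun y (hy : 1 < y) => show 1 ≤ |y| by rw [abs_of_pos] <;> linarith
  have h_zy := integrableOn_cexp_mul_of_le measurableSet_Ioi hβ fun y (hy : 1 < y) =>
    mul_le_mul_of_nonneg_right hz (by linarith)
  have h_moment : IntegrableOn (fun y : ℝ => cexp (z * y) - 1 + z) (Ioi 1) ν :=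
    (h_zy.sub (integrableOn_const hfin)).add (integrableOn_const hfin)
  have h_split : levyIntegrand z = fun y : ℝ => (cexp (z * y) - 1 + z) + -z * cexp y := by
    funext y; rw [levyIntegrand]; ring
  rw [IntegrableOn, h_split, integrable_add_iff_integrable_right' h_moment,
    integrable_const_mul_iff (isUnit_iff_ne_zero.2 (neg_ne_zero.2 hz0))]
  rfl

lemma integrableOn_levyIntegrand_iff
    (hν : ∫⁻ y, ENNReal.ofReal (min (y ^ 2) 1) ∂ν ≠ ⊤) {β γ : ℝ}
    (hplus : IntegrableOn (fun y => Real.exp (β * y)) (Ioi 1) ν)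
    (hminus : IntegrableOn (fun y => Real.exp (γ * y)) (Iio (-1)) ν)
    {z : ℂ} (hzβ : z.re ≤ β) (hzγ : γ ≤ z.re) (hz0 : z ≠ 0) :
    IntegrableOn (levyIntegrand z) {y | y ≠ 0} ν ↔
      IntegrableOn (fun y : ℝ => cexp y) (Ioi 1) ν := by
  rw [← integrableOn_levyIntegrand_Ioi_iff hν hplus hzβ hz0]
  refine ⟨fun h => h.mono_set fun y (hy : 1 < y) => (zero_lt_one.trans hy).ne', fun h => ?_⟩
  refine ((integrableOn_levyIntegrand_abs_le_one hν z).union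
    ((integrableOn_levyIntegrand_Iio hν hminus hzγ).union h)).mono_set fun y _ => ?_
  show |y| ≤ 1 ∨ y < -1 ∨ 1 < y
  rw [abs_le]
  grind

lemma re_setIntegral_levyIntegrand_le
    (hν : ∫⁻ y, ENNReal.ofReal (min (y ^ 2) 1) ∂ν ≠ ⊤) {β γ : ℝ}
    (hplus : IntegrableOn (fun y => Real.exp (β * y)) (Ioi 1) ν)
    (hminus : IntegrableOn (fun y => Real.exp (γ * y)) (Iio (-1)) ν)
    {z : ℂ} (hzβ : z.re ≤ β) (hzγ : γ ≤ z.re) :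
    (∫ y in {y | y ≠ 0}, levyIntegrand z y ∂ν).re ≤
      (∫ y in {y | y ≠ 0}, levyIntegrand z.re y ∂ν).re := by
  by_cases hre : z.re = 0
  · have hzero : levyIntegrand (z.re : ℂ) = 0 := by
      funext y; simp [levyIntegrand, hre]
    simpa [hzero] using re_integral_nonpos fun y => by
      simpa [hzero] using re_levyIntegrand_le z y
  · have hz0 : z ≠ 0 := fun h => hre (by simp [h])
    refine re_integral_mono_of_integrable_iff ?_ (re_levyIntegrand_le z)
    rw [← IntegrableOn, ← IntegrableOn, integrableOn_levyIntegrand_iff hν hplus hminus hzβ hzγ hz0,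
      integrableOn_levyIntegrand_iff hν hplus hminus (by simpa) (by simpa) (by exact_mod_cast hre)]

end LevyMeasure

theorem re_charExponent_bound_general (ν : Measure ℝ) (α a σ r : ℝ) (ha : 0 < a)
    (hν : ∫⁻ y, ENNReal.ofReal (min (y ^ 2) 1) ∂ν ≠ ⊤)
    (hplus : IntegrableOn (fun y : ℝ => Real.exp ((α + a) * y)) {y : ℝ | 1 < y} ν)
    (hminus : IntegrableOn (fun y : ℝ => Real.exp ((α - a) * y)) {y : ℝ | y < -1} ν)
    (Ψ : ℂ → ℂ)
    (hΨ : ∀ z : ℂ, Ψ z = ((r : ℂ) - (σ : ℂ) ^ 2 / 2) * z + (σ : ℂ) ^ 2 * z ^ 2 / 2 +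
      ∫ y in {y : ℝ | y ≠ 0},
        (Complex.exp (z * (y : ℂ)) - 1 - (Complex.exp (y : ℂ) - 1) * z) ∂ν) :
    ∀ ω : ℝ, (Ψ ((α : ℂ) - Complex.I * (ω : ℂ))).re ≤
      (Ψ (α : ℂ)).re - σ ^ 2 * ω ^ 2 / 2 := by
  intro ω
  set z : ℂ := α - I * ω
  have hre : z.re = α := by simp [z]
  have h_jumps := re_setIntegral_levyIntegrand_le hν hplus hminus (z := z)
    (by linarith) (by linarith)
  rw [hre] at h_jumps
  have h_diffusion : (((r : ℂ) - (σ : ℂ) ^ 2 / 2) * z + (σ : ℂ) ^ 2 * z ^ 2 / 2).re =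
      (((r : ℂ) - (σ : ℂ) ^ 2 / 2) * α + (σ : ℂ) ^ 2 * (α : ℂ) ^ 2 / 2).re - σ ^ 2 * ω ^ 2 / 2 := by
    simp [z, sq]
    ring
  rw [hΨ, hΨ]
  simp only [add_re] at h_diffusion ⊢
  unfold levyIntegrand at h_jumps
  linarith

theorem re_charExponent_bound (ν : Measure ℝ) (α a σ r : ℝ) (ha : 0 < a) (hσ : 0 ≤ σ)
    (hν : ∫⁻ y, ENNReal.ofReal (min (y ^ 2) 1) ∂ν ≠ ⊤)
    (hplus : IntegrableOn (fun y : ℝ => Real.exp ((α + a) * y)) {y : ℝ | 1 < y} ν)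
    (hminus : IntegrableOn (fun y : ℝ => Real.exp ((α - a) * y)) {y : ℝ | y < -1} ν)
    (Ψ : ℂ → ℂ)
    (hΨ : ∀ z : ℂ, Ψ z = ((r : ℂ) - (σ : ℂ) ^ 2 / 2) * z + (σ : ℂ) ^ 2 * z ^ 2 / 2 +
      ∫ y in {y : ℝ | y ≠ 0},
        (Complex.exp (z * (y : ℂ)) - 1 - (Complex.exp (y : ℂ) - 1) * z) ∂ν) :
    ∀ ω : ℝ, (Ψ ((α : ℂ) - Complex.I * (ω : ℂ))).re ≤
      (Ψ (α : ℂ)).re - σ ^ 2 * ω ^ 2 / 2 :=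
  re_charExponent_bound_general ν α a σ r ha hν hplus hminus Ψ hΨ
end

section
/- Let α > 1, k ∈ ℝ, S₀ > 0 and define the damped call payoff g_α(x) = e^{-αx}·S₀·max(e^x - e^k, 0). Then g_α ∈ L¹(ℝ) and its Fourier transform satisfies ĝ_α(ω) = ∫_ℝ e^{iωx} g_α(x) dx = S₀·e^{(1 - α + iω)k} / ((1 + iω - α)(iω - α)) for all real ω. -/
/-!
For `x > k` the damped payoff is `S₀ (e^{(1-α)x} - eᵏ e^{-αx})`, and it vanishes for `x ≤ k`.
With `c = iω - α`, both `e^{(c+1)x}` and `e^{cx}` decay on `(k, ∞)` because `α > 1`, with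
integrals `-e^{(c+1)k}/(c+1)` and `-e^{ck}/c`. As `eᵏ e^{ck} = e^{(c+1)k}` and `(c+1) - c = 1`,
the two terms combine into `e^{(c+1)k} / ((c+1)c)`.
-/

open MeasureTheory Complex Set
open scoped Real

lemma max_exp_sub_exp_zero_eq_indicator (k x : ℝ) :
    max (rexp x - rexp k) 0 = (Ioi k).indicator (fun y => rexp y - rexp k) x := by
  by_cases hx : x ∈ Ioi k
  · rw [indicator_of_mem hx, max_eq_left (sub_nonneg.2 (Real.exp_le_exp.2 hx.le))]
  · rw [indicator_of_notMem hx, max_eq_right (sub_nonpos.2 (Real.exp_le_exp.2 (not_lt.1 hx)))]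

lemma Real.exp_mul_mul_exp_sub_exp (a k x : ℝ) :
    rexp (a * x) * (rexp x - rexp k) = rexp ((a + 1) * x) - rexp k * rexp (a * x) := by
  rw [add_one_mul, Real.exp_add]
  ring

lemma Complex.exp_mul_mul_exp_sub_exp (c : ℂ) (k x : ℝ) :
    cexp (c * x) * ((rexp x - rexp k : ℝ) : ℂ) =
      cexp ((c + 1) * x) - rexp k * cexp (c * x) := by
  rw [add_one_mul, Complex.exp_add]
  push_cast
  ring

lemma integrableOn_exp_mul_mul_exp_sub_exp {a : ℝ} (ha : a < -1) (k : ℝ) :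
    IntegrableOn (fun x => rexp (a * x) * (rexp x - rexp k)) (Ioi k) := by
  simp_rw [Real.exp_mul_mul_exp_sub_exp]
  exact (integrableOn_exp_mul_Ioi (by linarith) k).sub
    ((integrableOn_exp_mul_Ioi (by linarith) k).const_mul _)

lemma integral_Ioi_cexp_mul_exp_sub_exp {c : ℂ} (hc : c.re < -1) (k : ℝ) :
    ∫ x in Ioi k, cexp (c * x) * ((rexp x - rexp k : ℝ) : ℂ) =
      cexp ((c + 1) * k) / ((c + 1) * c) := by
  have hc₁ : (c + 1).re < 0 := by simp only [add_re, one_re]; linarith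
  have hc₀ : c.re < 0 := by linarith
  simp_rw [Complex.exp_mul_mul_exp_sub_exp]
  rw [integral_sub (integrableOn_exp_mul_complex_Ioi hc₁ k)
      ((integrableOn_exp_mul_complex_Ioi hc₀ k).const_mul _), integral_const_mul,
    integral_exp_mul_complex_Ioi hc₁, integral_exp_mul_complex_Ioi hc₀]
  have hexp : (rexp k : ℂ) * cexp (c * k) = cexp ((c + 1) * k) := by
    rw [ofReal_exp, ← Complex.exp_add]
    ring_nf
  have hc₁0 : c + 1 ≠ 0 := fun h => by simp [h] at hc₁
  have hc0 : c ≠ 0 := fun h => by simp [h] at hc₀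
  rw [mul_div_assoc', mul_neg, hexp]
  field_simp
  ring

theorem damped_call_integrable_and_fourier_general (α k S₀ : ℝ) (hα : 1 < α)
    (g : ℝ → ℝ)
    (hg : ∀ x : ℝ, g x = Real.exp (-α * x) * (S₀ * max (Real.exp x - Real.exp k) 0)) :
    Integrable g ∧
      ∀ ω : ℝ, (∫ x : ℝ, Complex.exp (Complex.I * (ω : ℂ) * (x : ℂ)) * (g x : ℂ)) =
        (S₀ : ℂ) * Complex.exp ((1 - (α : ℂ) + Complex.I * (ω : ℂ)) * (k : ℂ)) /
          ((1 + Complex.I * (ω : ℂ) - (α : ℂ)) * (Complex.I * (ω : ℂ) - (α : ℂ))) := by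
  have hg_indicator : g = (Ioi k).indicator
      (fun x => S₀ * (rexp (-α * x) * (rexp x - rexp k))) := by
    funext x
    rw [hg, max_exp_sub_exp_zero_eq_indicator, indicator_apply, indicator_apply]
    split_ifs <;> ring
  refine ⟨?_, fun ω => ?_⟩
  · rw [hg_indicator, integrable_indicator_iff measurableSet_Ioi]
    exact (integrableOn_exp_mul_mul_exp_sub_exp (a := -α) (by linarith) k).const_mul S₀
  · have hc : (I * ω - α).re < -1 := by simpa using hα
    have hintegrand : ∀ x : ℝ, cexp (I * ω * x) * (g x : ℂ) = (Ioi k).indicator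
        (fun x : ℝ => (S₀ : ℂ) * (cexp ((I * ω - α) * x) * ((rexp x - rexp k : ℝ) : ℂ))) x := by
      intro x
      have hexp : cexp ((I * ω - α) * x) = cexp (I * ω * x) * (rexp (-α * x) : ℂ) := by
        rw [ofReal_exp, ← Complex.exp_add]
        push_cast
        ring_nf
      rw [hg_indicator, indicator_apply, indicator_apply, hexp]
      split_ifs
      · push_cast
        ring
      · simp
    simp_rw [hintegrand]
    rw [integral_indicator measurableSet_Ioi, integral_const_mul, integral_Ioi_cexp_mul_exp_sub_exp hc]
    ring_nf

theorem damped_call_integrable_and_fourier (α k S₀ : ℝ) (hα : 1 < α) (hS : 0 < S₀)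
    (g : ℝ → ℝ)
    (hg : ∀ x : ℝ, g x = Real.exp (-α * x) * (S₀ * max (Real.exp x - Real.exp k) 0)) :
    Integrable g ∧
      ∀ ω : ℝ, (∫ x : ℝ, Complex.exp (Complex.I * (ω : ℂ) * (x : ℂ)) * (g x : ℂ)) =
        (S₀ : ℂ) * Complex.exp ((1 - (α : ℂ) + Complex.I * (ω : ℂ)) * (k : ℂ)) /
          ((1 + Complex.I * (ω : ℂ) - (α : ℂ)) * (Complex.I * (ω : ℂ) - (α : ℂ))) :=
  damped_call_integrable_and_fourier_general α k S₀ hα g hg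
end

section
/- Let a > 0, α ∈ ℝ, and suppose x ↦ e^{b|x|}·e^{-αx}·g(x) belongs to L²(ℝ) for every b < a, where g : ℝ → ℝ. Then the Fourier transform of g_α(x) = e^{-αx}g(x) extends to an analytic function on the strip {z ∈ ℂ : |Im z| < a}. -/
/-! The weight `exp (-(b - c) |x|)` is square integrable, so by Cauchy–Schwarz the `L²` bounds
upgrade to `exp (c |x|) g_α ∈ L¹` for every `c < a`. For `|Im z| ≤ b < c` the kernel satisfies
`|exp (i z x)| ≤ exp (b |x|)`, and `|x| exp (b |x|) ≤ C exp (c |x|)`, so both the integrand and its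
`z`-derivative are dominated locally uniformly in the strip; differentiating under the integral
sign gives a holomorphic, hence analytic, extension. -/

open MeasureTheory Complex

lemma integrable_exp_neg_mul_abs {c : ℝ} (hc : 0 < c) :
    Integrable (fun x : ℝ => Real.exp (-c * |x|)) := by
  rw [← integrableOn_univ, ← Set.Iic_union_Ioi (a := 0)]
  refine IntegrableOn.union ?_ ?_
  · refine (integrableOn_exp_mul_Iic hc 0).congr_fun (fun x hx => ?_) measurableSet_Iic
    rw [abs_of_nonpos hx, neg_mul_neg]
  · refine (integrableOn_exp_mul_Ioi (neg_neg_of_pos hc) 0).congr_fun (fun x hx => ?_)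
      measurableSet_Ioi
    rw [abs_of_pos hx]

lemma memLp_two_exp_neg_mul_abs {c : ℝ} (hc : 0 < c) :
    MemLp (fun x : ℝ => Real.exp (-c * |x|)) 2 volume := by
  rw [memLp_two_iff_integrable_sq (by fun_prop)]
  refine (integrable_exp_neg_mul_abs (mul_pos two_pos hc)).congr (ae_of_all _ fun x => ?_)
  simp only [sq, ← Real.exp_add]
  ring_nf

lemma abs_mul_exp_neg_mul_abs_le {δ : ℝ} (hδ : 0 < δ) (x : ℝ) :
    |x| * Real.exp (-δ * |x|) ≤ δ⁻¹ * Real.exp (-1) := by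
  rw [le_inv_mul_iff₀ hδ, ← mul_assoc, neg_mul]
  exact Real.mul_exp_neg_le_exp_neg_one (δ * |x|)

section ExpWeighted

variable {E : Type*} [NormedAddCommGroup E] [NormedSpace ℝ E] {f : ℝ → E}

lemma MeasureTheory.AEStronglyMeasurable.of_exp_mul_abs_smul {μ : Measure ℝ} {b : ℝ}
    (h : AEStronglyMeasurable (fun x => Real.exp (b * |x|) • f x) μ) :
    AEStronglyMeasurable f μ := by
  refine (AEStronglyMeasurable.smul (f := fun x : ℝ => Real.exp (-b * |x|)) (by fun_prop) h).congr
    (ae_of_all _ fun x => ?_)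
  simp only [Pi.smul_apply', smul_smul, ← Real.exp_add, neg_mul, neg_add_cancel, Real.exp_zero,
    one_smul]

lemma MeasureTheory.MemLp.integrable_exp_mul_abs_smul {b c : ℝ} (hcb : c < b)
    (hf : MemLp (fun x => Real.exp (b * |x|) • f x) 2 volume) :
    Integrable (fun x => Real.exp (c * |x|) • f x) := by
  have h : MemLp (_ • _) 1 volume := hf.smul (memLp_two_exp_neg_mul_abs (sub_pos.2 hcb))
  refine (memLp_one_iff_integrable.1 h).congr (ae_of_all _ fun x => ?_)
  simp only [Pi.smul_apply', smul_smul, ← Real.exp_add]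
  ring_nf

lemma MeasureTheory.Integrable.abs_mul_exp_mul_abs_smul {b c : ℝ} (hbc : b < c)
    (hf : Integrable (fun x => Real.exp (c * |x|) • f x)) :
    Integrable (fun x => (|x| * Real.exp (b * |x|)) • f x) := by
  refine (hf.bdd_smul (φ := fun x : ℝ => |x| * Real.exp (-(c - b) * |x|))
    ((c - b)⁻¹ * Real.exp (-1)) (by fun_prop) (ae_of_all _ fun x => ?_)).congr
    (ae_of_all _ fun x => ?_)
  · rw [Real.norm_of_nonneg (by positivity)]
    exact abs_mul_exp_neg_mul_abs_le (sub_pos.2 hbc) x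
  · simp only [Pi.smul_apply', smul_smul, mul_assoc, ← Real.exp_add]
    ring_nf

end ExpWeighted

lemma norm_cexp_I_mul_mul_ofReal_le {z : ℂ} {b : ℝ} (hz : |z.im| ≤ b) (x : ℝ) :
    ‖cexp (I * z * x)‖ ≤ Real.exp (b * |x|) := by
  rw [norm_exp, Real.exp_le_exp]
  calc (I * z * x).re = -(z.im * x) := by simp
    _ ≤ |z.im| * |x| := by rw [← abs_mul]; exact neg_le_abs _
    _ ≤ b * |x| := by gcongr

lemma abs_im_le_of_mem_ball {z₀ z : ℂ} {b : ℝ} (hz : z ∈ Metric.ball z₀ (b - |z₀.im|)) :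
    |z.im| ≤ b := by
  rw [Metric.mem_ball, dist_eq_norm] at hz
  have := (abs_sub_abs_le_abs_sub z.im z₀.im).trans (abs_im_le_norm (z - z₀))
  linarith

theorem differentiableOn_integral_cexp_I_mul_smul {E : Type*} [NormedAddCommGroup E]
    [NormedSpace ℂ E] {f : ℝ → E} {a : ℝ}
    (hf : ∀ b < a, Integrable (fun x => Real.exp (b * |x|) • f x)) :
    DifferentiableOn ℂ (fun z : ℂ => ∫ x : ℝ, cexp (I * z * x) • f x) {z | |z.im| < a} := by
  intro z₀ hz₀
  obtain ⟨b, hz₀b, hba⟩ := exists_between (Set.mem_ofPred.1 hz₀)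
  obtain ⟨c, hbc, hca⟩ := exists_between hba
  have hfm : AEStronglyMeasurable f volume := (hf b hba).1.of_exp_mul_abs_smul
  have hderiv := hasDerivAt_integral_of_dominated_loc_of_deriv_le
    (F := fun z x => cexp (I * z * x) • f x) (F' := fun z x => (cexp (I * z * x) * (I * x)) • f x)
    (bound := fun x => ‖(|x| * Real.exp (b * |x|)) • f x‖)
    (Metric.ball_mem_nhds z₀ (sub_pos.2 hz₀b))
    (.of_forall fun z => (by fun_prop : Continuous _).aestronglyMeasurable.smul hfm) ?_
    ((by fun_prop : Continuous _).aestronglyMeasurable.smul hfm)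
    (ae_of_all _ fun x z hz => ?_) ((hf c hca).abs_mul_exp_mul_abs_smul hbc).norm
    (ae_of_all _ fun x z _ => ?_)
  · exact hderiv.2.differentiableAt.differentiableWithinAt
  · refine (hf b hba).norm.mono' (by fun_prop) (ae_of_all _ fun x => ?_)
    rw [norm_smul, norm_smul, Real.norm_of_nonneg (Real.exp_pos _).le]
    gcongr
    exact norm_cexp_I_mul_mul_ofReal_le hz₀b.le x
  · rw [norm_smul, norm_smul, norm_mul, Real.norm_of_nonneg (by positivity), mul_comm |x|]
    simp only [norm_mul, norm_I, norm_real, Real.norm_eq_abs, one_mul]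
    gcongr
    exact norm_cexp_I_mul_mul_ofReal_le (abs_im_le_of_mem_ball hz) x
  · refine HasDerivAt.smul_const ?_ (f x)
    simpa using (((hasDerivAt_id z).const_mul I).mul_const (x : ℂ)).cexp

theorem paley_wiener_strip_general (a α : ℝ) (g : ℝ → ℝ)
    (hg : ∀ b : ℝ, b < a →
      MemLp (fun x : ℝ => Real.exp (b * |x|) * (Real.exp (-α * x) * g x)) 2 volume) :
    ∃ F : ℂ → ℂ,
      AnalyticOnNhd ℂ F {z : ℂ | |z.im| < a} ∧
      ∀ ω : ℝ, F (ω : ℂ) =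
        ∫ x : ℝ, Complex.exp (Complex.I * (ω : ℂ) * (x : ℂ)) *
          ((Real.exp (-α * x) * g x : ℝ) : ℂ) := by
  have hL1 : ∀ b < a,
      Integrable fun x : ℝ => Real.exp (b * |x|) • ((Real.exp (-α * x) * g x : ℝ) : ℂ) := by
    intro b hb
    obtain ⟨c, hbc, hca⟩ := exists_between hb
    have hreal := ((hg c hca).integrable_exp_mul_abs_smul (f := fun x => Real.exp (-α * x) * g x) hbc)
    refine (hreal.ofReal (𝕜 := ℂ)).congr (ae_of_all _ fun x => ?_)
    simp only [smul_eq_mul, real_smul, coe_algebraMap, ofReal_mul]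
  have hopen : IsOpen {z : ℂ | |z.im| < a} := isOpen_lt (by fun_prop) continuous_const
  exact ⟨_, (differentiableOn_integral_cexp_I_mul_smul hL1).analyticOnNhd hopen,
    fun ω => by simp only [smul_eq_mul]⟩

theorem paley_wiener_strip (a α : ℝ) (ha : 0 < a) (g : ℝ → ℝ)
    (hg : ∀ b : ℝ, b < a →
      MemLp (fun x : ℝ => Real.exp (b * |x|) * (Real.exp (-α * x) * g x)) 2 volume) :
    ∃ F : ℂ → ℂ,
      AnalyticOnNhd ℂ F {z : ℂ | |z.im| < a} ∧
      ∀ ω : ℝ, F (ω : ℂ) =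
        ∫ x : ℝ, Complex.exp (Complex.I * (ω : ℂ) * (x : ℂ)) *
          ((Real.exp (-α * x) * g x : ℝ) : ℂ) :=
  paley_wiener_strip_general a α g hg
end
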